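/- Let A ∈ M_j with j ≥ 2. Then A admits a decomposition into at least two blocks: there exist m ≥ 2, matrices A_k ∈ M_{j_k} for k = 1,...,m with Σ j_k = j, and a partition of {1,...,j} into the images of injections σ_k : {1,...,j_k} → {1,...,j}, such that a_{σ_k(i),σ_k(l)} = (A_k)_{i,l} for indices within the same block, and a_{i,l} = s for indices in different blocks, where s = min_{i≠l} a_{i,l} is strictly smaller than every off-diagonal entry of every A_k. -/
import Mathlib


/-- Membership in the class `M_j` of ultrametric matrices from the paper. -/
def MemUltra (η : ℝ) {ι : Type*} [Fintype ι] [DecidableEq ι] (A : Matrix ι ι ℝ) : Prop :=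
  A.IsSymm ∧ (∀ i, A i i = 1) ∧
  (∀ i l, i ≠ l → 0 ≤ A i l ∧ A i l ≤ 1 - η) ∧
  (∀ i l p, i ≠ l → l ≠ p → i ≠ p → min (A l p) (A i p) ≤ A i l)

/-- any `A ∈ M_j` with `j ≥ 2` admits a block decomposition
`A = A₁^{σ₁} ⊞_s ⋯ ⊞_s A_m^{σ_m}` with `m ≥ 2` blocks, where `s` is the minimal
off-diagonal entry of `A` and is strictly smaller than all off-diagonal entries of the blocks. -/
theorem ultrametric_matrix_decomposition {η : ℝ} (hη : 0 < η) {j : ℕ} (hj : 2 ≤ j)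
    (A : Matrix (Fin j) (Fin j) ℝ) (hA : MemUltra η A) (s : ℝ)
    (hs_lb : ∀ i l, i ≠ l → s ≤ A i l)
    (hs_attained : ∃ i l, i ≠ l ∧ A i l = s) :
    ∃ m : ℕ, 2 ≤ m ∧
      ∃ (jk : Fin m → ℕ) (Ak : ∀ k, Matrix (Fin (jk k)) (Fin (jk k)) ℝ)
        (σ : ∀ k, Fin (jk k) → Fin j),
        (∑ k, jk k) = j ∧
        (∀ k, Function.Injective (σ k)) ∧
        Function.Bijective (fun p : (Σ k, Fin (jk k)) => σ p.1 p.2) ∧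
        (∀ k, MemUltra η (Ak k)) ∧
        (∀ k (i i' : Fin (jk k)), A (σ k i) (σ k i') = Ak k i i') ∧
        (∀ k k', k ≠ k' → ∀ (i : Fin (jk k)) (i' : Fin (jk k')), A (σ k i) (σ k' i') = s) ∧
        (∀ k (i i' : Fin (jk k)), i ≠ i' → s < Ak k i i') := by
  classical
  obtain ⟨hsymm, hdiag, hbound, hultra⟩ := hA
  have hAsymm : ∀ i l, A i l = A l i := fun i l => hsymm.apply l i
  -- the relation "same block"
  let r : Fin j → Fin j → Prop := fun i l => i = l ∨ s < A i l
  have hrefl : ∀ i, r i i := fun i => Or.inl rfl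
  have hsym : ∀ {i l}, r i l → r l i := by
    rintro i l (rfl | h)
    · exact Or.inl rfl
    · exact Or.inr (hAsymm l i ▸ h)
  have htrans : ∀ {i l p}, r i l → r l p → r i p := by
    intro i l p h1 h2
    by_cases hip : i = p
    · exact Or.inl hip
    by_cases hil : i = l
    · subst hil; exact h2
    by_cases hlp : l = p
    · subst hlp; exact h1
    have h1' : s < A i l := h1.resolve_left hil
    have h2' : s < A l p := h2.resolve_left hlp
    have hu := hultra i p l hip (fun h => hlp h.symm) hil
    exact Or.inr (lt_of_lt_of_le (lt_min (hAsymm p l ▸ h2') h1') hu)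
  let st : Setoid (Fin j) := ⟨r, hrefl, fun h => hsym h, fun h h' => htrans h h'⟩
  let Q := Quotient st
  let m := Fintype.card Q
  -- at least two classes
  have hm : 2 ≤ m := by
    obtain ⟨i, l, hil, hils⟩ := hs_attained
    have hne : (Quotient.mk st i : Q) ≠ Quotient.mk st l := by
      intro h
      rcases Quotient.exact h with h' | h'
      · exact hil h'
      · rw [hils] at h'; exact lt_irrefl s h'
    have : 1 < Fintype.card Q := Fintype.one_lt_card_iff_nontrivial.mpr ⟨_, _, hne⟩
    exact this
  let e : Q ≃ Fin m := Fintype.equivFin Q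
  let C : Fin m → Type := fun k => {i : Fin j // e (Quotient.mk st i) = k}
  let jk : Fin m → ℕ := fun k => Fintype.card (C k)
  let f : ∀ k, Fin (jk k) ≃ C k := fun k => (Fintype.equivFin (C k)).symm
  let σ : ∀ k, Fin (jk k) → Fin j := fun k i => (f k i).val
  have hσinj : ∀ k, Function.Injective (σ k) := fun k =>
    Subtype.val_injective.comp (f k).injective
  -- indices in the same block are related
  have hsame : ∀ k (i i' : Fin (jk k)), r (σ k i) (σ k i') := by
    intro k i i'
    have h1 : e (Quotient.mk st (σ k i)) = k := (f k i).2
    have h2 : e (Quotient.mk st (σ k i')) = k := (f k i').2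
    have : (Quotient.mk st (σ k i) : Q) = Quotient.mk st (σ k i') := by
      apply e.injective; rw [h1, h2]
    exact Quotient.exact this
  refine ⟨m, hm, jk, fun k i i' => A (σ k i) (σ k i'), σ, ?_, hσinj, ?_, ?_, ?_, ?_, ?_⟩
  · -- sum of block sizes
    have E : (Σ k, Fin (jk k)) ≃ Fin j :=
      (Equiv.sigmaCongrRight f).trans (Equiv.sigmaFiberEquiv (fun i => e (Quotient.mk st i)))
    have := Fintype.card_congr E
    simpa [Fintype.card_sigma] using this
  · -- bijectivity
    exact ((Equiv.sigmaCongrRight f).trans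
      (Equiv.sigmaFiberEquiv (fun i => e (Quotient.mk st i)))).bijective
  · -- each block is in M
    intro k
    refine ⟨?_, fun i => hdiag _, fun i l h => hbound _ _ (fun hh => h (hσinj k hh)), ?_⟩
    · ext i l; exact hAsymm _ _
    · intro i l p h1 h2 h3
      exact hultra _ _ _ (fun hh => h1 (hσinj k hh)) (fun hh => h2 (hσinj k hh))
        (fun hh => h3 (hσinj k hh))
  · intro k i i'; rfl
  · -- off-block entries equal s
    intro k k' hkk' i i'
    have hq : (Quotient.mk st (σ k i) : Q) ≠ Quotient.mk st (σ k' i') := by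
      intro h
      apply hkk'
      rw [← (f k i).2, ← (f k' i').2, h]
    have hne : σ k i ≠ σ k' i' := fun h => hq (by rw [h])
    have hnr : ¬ r (σ k i) (σ k' i') := fun h => hq (Quotient.sound h)
    simp only [r, not_or, not_lt] at hnr
    have h2 := hnr.2
    exact le_antisymm h2 (hs_lb _ _ hne)
  · -- within-block entries strictly exceed s
    intro k i i' hii'
    have hne : σ k i ≠ σ k i' := fun h => hii' (hσinj k h)
    exact (hsame k i i').resolve_left hne
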